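/- arXiv:1304.7914 — 4 statements merged into one kernel-verified Lean document; each statement's English description precedes it below -/
import Mathlib

section
/- Let p, K be positive natural numbers, let A be a p × K integer matrix whose rank (over ℚ) is p, and let F : Fin p → Fin K be an injective map selecting p columns of A. Then the p × p submatrix A_F of A (with columns selected according to F) has nonzero determinant if and only if there is no circuit f of A whose support is contained in the range of F. -/
/-- The support of an integer vector: the set of indices with nonzero entry. -/
def supp {K : ℕ} (m : Fin K → ℤ) : Set (Fin K) := {j : Fin K | m j ≠ 0}

/-- A circuit of an integer matrix `A`: a nonzero integer kernel vector of `A` whose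
entries have gcd `1` and whose support is minimal (no nonzero kernel vector has support
strictly contained in it). -/
def IsCircuit {p K : ℕ} (A : Matrix (Fin p) (Fin K) ℤ) (m : Fin K → ℤ) : Prop :=
  m ≠ 0 ∧ A.mulVec m = 0 ∧ Finset.univ.gcd m = 1 ∧
    ¬ ∃ v : Fin K → ℤ, v ≠ 0 ∧ A.mulVec v = 0 ∧ supp v ⊂ supp m

/-- Key summation lemma: if `f` is supported on the range of the injective `F`, the
`mulVec` of the column submatrix against `f ∘ F` agrees with `mulVec` of `A` against `f`. -/
lemma mulVec_submatrix_of_supp {p K : ℕ} (A : Matrix (Fin p) (Fin K) ℤ)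
    (F : Fin p → Fin K) (hF : Function.Injective F) (f : Fin K → ℤ)
    (hsupp : supp f ⊆ Set.range F) :
    (A.submatrix id F).mulVec (f ∘ F) = A.mulVec f := by
  classical
  funext j
  show ∑ i, A j (F i) * f (F i) = ∑ k, A j k * f k
  rw [show (∑ i, A j (F i) * f (F i)) = ∑ k ∈ Finset.univ.image F, A j k * f k from
      (Finset.sum_image (f := fun k => A j k * f k) (g := F) (fun a _ b _ h => hF h)).symm]
  refine Finset.sum_subset (Finset.subset_univ _) (fun k _ hk => ?_)
  have : f k = 0 := by
    by_contra h
    rcases hsupp h with ⟨i, rfl⟩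
    exact hk (Finset.mem_image_of_mem F (Finset.mem_univ i))
  rw [this, mul_zero]

/-- main Theorem 1 of the paper: for a full row rank `p × K` integer matrix
`A` and an injective selection `F` of `p` columns, the square submatrix `A.submatrix id F`
is nonsingular iff no circuit of `A` has support contained in the range of `F`. -/
theorem saturated_iff_no_circuit (p K : ℕ) (hp : 0 < p) (hK : 0 < K)
    (A : Matrix (Fin p) (Fin K) ℤ)
    (hrank : (A.map (Int.cast : ℤ → ℚ)).rank = p)
    (F : Fin p → Fin K) (hF : Function.Injective F) :
    (A.submatrix id F).det ≠ 0 ↔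
      ¬ ∃ f : Fin K → ℤ, IsCircuit A f ∧ supp f ⊆ Set.range F := by
  classical
  constructor
  · -- det ≠ 0 ⇒ no circuit supported in range F
    rintro hdet ⟨f, ⟨hf0, hfker, -, -⟩, hsupp⟩
    have hx0 : f ∘ F ≠ 0 := by
      obtain ⟨k, hk⟩ := Function.ne_iff.1 hf0
      obtain ⟨i, rfl⟩ := hsupp hk
      exact Function.ne_iff.2 ⟨i, hk⟩
    have : (A.submatrix id F).det = 0 :=
      Matrix.exists_mulVec_eq_zero_iff.1
        ⟨f ∘ F, hx0, by rw [mulVec_submatrix_of_supp A F hF f hsupp, hfker]⟩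
    exact hdet this
  · -- contrapositive: det = 0 ⇒ circuit supported in range F
    intro hnc
    by_contra hdet
    apply hnc
    obtain ⟨v, hv0, hvker⟩ := Matrix.exists_mulVec_eq_zero_iff.2 hdet
    -- extend v to Fin K
    set y : Fin K → ℤ := Function.extend F v 0 with hy
    have hyF : y ∘ F = v := by funext i; exact hF.extend_apply v 0 i
    have hysupp : supp y ⊆ Set.range F := by
      intro k hk
      by_contra hkr
      exact hk (Function.extend_apply' v (0 : Fin K → ℤ) k
        (fun h => hkr ⟨h.choose, h.choose_spec⟩))
    have hy0 : y ≠ 0 := fun h => hv0 (by rw [← hyF, h]; rfl)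
    have hyker : A.mulVec y = 0 := by
      rw [← mulVec_submatrix_of_supp A F hF y hysupp, hyF, hvker]
    -- the set of candidate kernel vectors
    set S : Set (Fin K → ℤ) := {w | w ≠ 0 ∧ A.mulVec w = 0 ∧ supp w ⊆ Set.range F} with hS
    have hySmem : y ∈ S := ⟨hy0, hyker, hysupp⟩
    set N : Set ℕ := {n | ∃ w ∈ S, (supp w).ncard = n} with hN
    have hNne : N.Nonempty := ⟨(supp y).ncard, y, hySmem, rfl⟩
    obtain ⟨m, hmS, hmcard⟩ := Nat.sInf_mem hNne
    have hmin : ∀ w : Fin K → ℤ, w ≠ 0 → A.mulVec w = 0 → ¬ (supp w ⊂ supp m) := by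
      intro w hw0 hwker hss
      have hwsupp : supp w ⊆ Set.range F := hss.subset.trans hmS.2.2
      have hlt : (supp w).ncard < (supp m).ncard :=
        Set.ncard_lt_ncard hss (Set.toFinite _)
      have : sInf N ≤ (supp w).ncard := Nat.sInf_le ⟨w, ⟨hw0, hwker, hwsupp⟩, rfl⟩
      omega
    obtain ⟨hm0, hmker, hmsupp⟩ := hmS
    -- normalize by the gcd
    set g : ℤ := Finset.univ.gcd m with hgdef
    have hgdvd : ∀ k, g ∣ m k := fun k => Finset.gcd_dvd (Finset.mem_univ k)
    obtain ⟨k0, hk0⟩ := Function.ne_iff.1 hm0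
    rw [Pi.zero_apply] at hk0
    have hg0 : g ≠ 0 := fun h => hk0 (Finset.gcd_eq_zero_iff.1 h k0 (Finset.mem_univ k0))
    set m' : Fin K → ℤ := fun k => m k / g with hm'def
    have hmeq : ∀ k, m k = g * m' k := fun k => (Int.mul_ediv_cancel' (hgdvd k)).symm
    have hsuppeq : supp m' = supp m := by
      ext k
      simp only [supp, Set.mem_setOf_eq]
      rw [hmeq k, mul_ne_zero_iff]
      constructor
      · intro h; exact ⟨hg0, h⟩
      · exact And.right
    refine ⟨m', ⟨?_, ?_, ?_, ?_⟩, hsuppeq ▸ hmsupp⟩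
    · intro h
      apply hk0
      rw [hmeq k0, h]
      simp
    · funext j
      have h1 : g * (A.mulVec m' j) = A.mulVec m j := by
        show g * ∑ k, A j k * m' k = ∑ k, A j k * m k
        rw [Finset.mul_sum]
        exact Finset.sum_congr rfl fun k _ => by rw [hmeq k]; ring
      have h2 : A.mulVec m j = 0 := by rw [hmker]; rfl
      have h3 : g * (A.mulVec m' j) = 0 := by rw [h1, h2]
      have := mul_eq_zero.1 h3
      show A.mulVec m' j = 0
      tauto
    · exact Finset.gcd_div_eq_one (Finset.mem_univ k0) hk0
    · rintro ⟨w, hw0, hwker, hss⟩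
      exact hmin w hw0 hwker (hsuppeq ▸ hss)
end

section
/- Let p, K be positive natural numbers, let A be a p × K integer matrix whose rank over ℚ is p, and let F be a finite set of exactly p column indices of A (a subset of Fin K of cardinality p). Then the square submatrix of A consisting of the columns indexed by F is nonsingular if and only if for every circuit f of A, the cardinality of supp(f) ∩ F is strictly smaller than the cardinality of supp(f). -/
/-- for a full row rank `p × K` integer matrix `A` and a set `F` of exactly
`p` column indices, the square submatrix of `A` on the columns in `F` is nonsingular iff
for every circuit `f` of `A` the cardinality of `supp f ∩ F` is strictly smaller than the
cardinality of `supp f`. -/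
theorem saturated_iff_circuit_intersections_small (p K : ℕ) (hp : 0 < p) (hK : 0 < K)
    (A : Matrix (Fin p) (Fin K) ℤ)
    (hrank : (A.map (Int.cast : ℤ → ℚ)).rank = p)
    (F : Finset (Fin K)) (hF : F.card = p) :
    (A.submatrix id (fun i : Fin p => ((F.orderIsoOfFin hF i : F) : Fin K))).det ≠ 0 ↔
      ∀ f : Fin K → ℤ, IsCircuit A f →
        (supp f ∩ (F : Set (Fin K))).ncard < (supp f).ncard := by
  classical
  set e : Fin p → Fin K := fun i => ((F.orderIsoOfFin hF i : F) : Fin K) with he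
  have heF : ∀ i, e i ∈ F := fun i => (F.orderIsoOfFin hF i).2
  have hinj : Function.Injective e := fun a b hab =>
    (F.orderIsoOfFin hF).injective (Subtype.ext hab)
  have himg : Finset.univ.image e = F := by
    apply Finset.eq_of_subset_of_card_le
    · intro k hk
      obtain ⟨i, -, rfl⟩ := Finset.mem_image.mp hk
      exact heF i
    · rw [Finset.card_image_of_injective _ hinj, Finset.card_univ, Fintype.card_fin, hF]
  have hsum : ∀ (h : Fin K → ℤ), ∑ j, h (e j) = ∑ k ∈ F, h k := by
    intro h
    rw [← himg, Finset.sum_image (fun a _ b _ hab => hinj hab)]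
  have hker : ∀ v : Fin K → ℤ, supp v ⊆ (F : Set (Fin K)) →
      (A.submatrix id e).mulVec (fun i => v (e i)) = A.mulVec v := by
    intro v hv
    funext i
    simp only [Matrix.mulVec, dotProduct, Matrix.submatrix_apply, id]
    rw [hsum (fun k => A i k * v k)]
    apply Finset.sum_subset (Finset.subset_univ F)
    intro k _ hk
    have hvk : v k = 0 := by
      by_contra h
      exact hk (Finset.mem_coe.mp (hv h))
    simp [hvk]
  constructor
  · intro hdet f hf
    have hfin : (supp f).Finite := Set.toFinite _
    have hsub : supp f ∩ (F : Set (Fin K)) ⊆ supp f := Set.inter_subset_left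
    rcases lt_or_eq_of_le (Set.ncard_le_ncard hsub hfin) with h | h
    · exact h
    exfalso
    have heq : supp f ∩ (F : Set (Fin K)) = supp f :=
      Set.eq_of_subset_of_ncard_le hsub h.ge hfin
    have hFsub : supp f ⊆ (F : Set (Fin K)) := by
      intro k hk
      rw [← heq] at hk
      exact hk.2
    obtain ⟨hne, hker0, -, -⟩ := hf
    have h1 : (A.submatrix id e).mulVec (fun i => f (e i)) = 0 := by
      rw [hker f hFsub, hker0]
    have h2 : (fun i => f (e i)) ≠ 0 := by
      obtain ⟨k, hk⟩ := Function.ne_iff.mp hne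
      have hkF : k ∈ Finset.univ.image e := himg.symm ▸ Finset.mem_coe.mp (hFsub hk)
      obtain ⟨i, -, hi⟩ := Finset.mem_image.mp hkF
      intro h0
      apply hk
      rw [← hi]
      exact congrFun h0 i
    exact hdet (Matrix.exists_mulVec_eq_zero_iff.mp ⟨_, h2, h1⟩)
  · intro hcirc
    by_contra hdet0
    obtain ⟨g, hg0, hgker⟩ := Matrix.exists_mulVec_eq_zero_iff.mpr hdet0
    set v : Fin K → ℤ :=
      fun k => if h : k ∈ F then g ((F.orderIsoOfFin hF).symm ⟨k, h⟩) else 0 with hv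
    have hve : ∀ i, v (e i) = g i := by
      intro i
      have hiF : e i ∈ F := heF i
      have hsub : (⟨e i, hiF⟩ : F) = F.orderIsoOfFin hF i := Subtype.ext rfl
      simp only [hv, dif_pos hiF, hsub, OrderIso.symm_apply_apply]
    have hvF : supp v ⊆ (F : Set (Fin K)) := by
      intro k hk
      by_contra hkF
      have : v k = 0 := by simp [hv, dif_neg (fun h => hkF (Finset.mem_coe.mpr h))]
      exact hk this
    have hv0 : v ≠ 0 := by
      obtain ⟨i, hi⟩ := Function.ne_iff.mp hg0
      intro h0
      apply hi
      rw [← hve i, h0]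
      rfl
    have hvker : A.mulVec v = 0 := by
      rw [← hker v hvF]
      have : (fun i => v (e i)) = g := funext hve
      rw [this, hgker]
    have hP : ∃ n, ∃ w : Fin K → ℤ, w ≠ 0 ∧ A.mulVec w = 0 ∧
        supp w ⊆ (F : Set (Fin K)) ∧ (supp w).ncard = n :=
      ⟨_, v, hv0, hvker, hvF, rfl⟩
    obtain ⟨w, hw0, hwker, hwF, hwn⟩ := Nat.find_spec hP
    set d := Finset.univ.gcd w with hd
    have hd0 : d ≠ 0 := by
      intro h
      apply hw0
      funext k
      exact Finset.gcd_eq_zero_iff.mp (hd ▸ h) k (Finset.mem_univ k)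
    obtain ⟨k0, hk0⟩ := Function.ne_iff.mp hw0
    set f : Fin K → ℤ := fun k => w k / d with hf
    have hdvd : ∀ k, d ∣ w k := fun k => Finset.gcd_dvd (Finset.mem_univ k)
    have hwf : ∀ k, w k = d * f k := fun k => (Int.mul_ediv_cancel' (hdvd k)).symm
    have hsupp : supp f = supp w := by
      ext k
      simp only [supp, Set.mem_setOf_eq]
      constructor
      · intro h h0
        apply h
        show w k / d = 0
        rw [h0]
        exact Int.zero_ediv d
      · intro h h0
        apply h
        rw [hwf k]
        show d * f k = 0
        rw [show f k = 0 from h0, mul_zero]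
    have hf0 : f ≠ 0 := by
      intro h0
      apply hk0
      rw [hwf k0, show f k0 = 0 from congrFun h0 k0, mul_zero]
      rfl
    have hfker : A.mulVec f = 0 := by
      funext i
      have h1 : A.mulVec w i = d * A.mulVec f i := by
        simp only [Matrix.mulVec, dotProduct, Finset.mul_sum]
        apply Finset.sum_congr rfl
        intro k _
        rw [hwf k]
        ring
      have h2 : A.mulVec w i = 0 := congrFun hwker i
      rw [h1] at h2
      have := (mul_eq_zero.mp h2).resolve_left hd0
      simpa using this
    have hgcd : Finset.univ.gcd f = 1 :=
      Finset.gcd_div_eq_one (Finset.mem_univ k0) hk0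
    have hmin : ¬ ∃ u : Fin K → ℤ, u ≠ 0 ∧ A.mulVec u = 0 ∧ supp u ⊂ supp f := by
      rintro ⟨u, hu0, huker, husub⟩
      have h1 : supp u ⊂ supp w := hsupp ▸ husub
      have h2 : supp u ⊆ (F : Set (Fin K)) := fun k hk => hwF (h1.subset hk)
      have h3 : (supp u).ncard < Nat.find hP := by
        rw [← hwn]
        exact Set.ncard_lt_ncard h1 (Set.toFinite _)
      exact Nat.find_min hP h3 ⟨u, hu0, huker, h2, rfl⟩
    have hcf : IsCircuit A f := ⟨hf0, hfker, hgcd, hmin⟩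
    have hlt := hcirc f hcf
    have heq : supp f ∩ (F : Set (Fin K)) = supp f :=
      Set.inter_eq_left.mpr (hsupp ▸ hwF)
    rw [heq] at hlt
    exact lt_irrefl _ hlt
end

section
/- Let A be a p × K matrix with entries in {0, 1} (viewed as an integer matrix). Suppose that for each subset J of the column indices of A there is a partition of J into two disjoint subsets J₁ and J₂ such that for every row index i, |Σ_{j ∈ J₁} A i j − Σ_{j ∈ J₂} A i j| ≤ 1. Then A is totally unimodular. -/
private lemma intMemSignTypeRange {x : ℤ} (h : x = 0 ∨ x = 1 ∨ x = -1) :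
    x ∈ Set.range SignType.cast := by
  rcases h with h | h | h <;> subst h
  · exact ⟨0, by simp⟩
  · exact ⟨1, by simp⟩
  · exact ⟨-1, by simp⟩

private lemma intOfSignTypeRange {x : ℤ} (h : x ∈ Set.range SignType.cast) :
    x = 0 ∨ x = 1 ∨ x = -1 := by
  obtain ⟨s, rfl⟩ := h
  cases s <;> simp

/-- Ghouila-Houri condition, item 1 of Proposition 1 of the paper: a `0-1`
integer matrix `A` such that every subset `J` of columns can be partitioned into two parts
`J₁`, `J₂` with `|∑_{j ∈ J₁} A i j − ∑_{j ∈ J₂} A i j| ≤ 1` for every row `i`, is totally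
unimodular. -/
theorem ghouilaHouri_totallyUnimodular (p K : ℕ) (A : Matrix (Fin p) (Fin K) ℤ)
    (h01 : ∀ i j, A i j = 0 ∨ A i j = 1)
    (hpart : ∀ J : Finset (Fin K), ∃ J₁ J₂ : Finset (Fin K),
      J₁ ∪ J₂ = J ∧ Disjoint J₁ J₂ ∧
      ∀ i : Fin p, |(∑ j ∈ J₁, A i j) - (∑ j ∈ J₂, A i j)| ≤ 1) :
    A.IsTotallyUnimodular := by
  classical
  intro k
  induction k with
  | zero =>
    intro f g _ _
    exact ⟨1, by simp [Matrix.det_fin_zero]⟩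
  | succ n ih =>
    intro f g hf hg
    set B : Matrix (Fin (n+1)) (Fin (n+1)) ℤ := A.submatrix f g with hBdef
    by_cases hd : B.det = 0
    · exact ⟨0, by simp [hd]⟩
    -- adjugate entries (first column) are 0 or ±1 by induction hypothesis
    have hadj : ∀ j, B.adjugate j 0 = 0 ∨ B.adjugate j 0 = 1 ∨ B.adjugate j 0 = -1 := by
      intro j
      rw [Matrix.adjugate_fin_succ_eq_det_submatrix]
      have hmem := ih (f ∘ Fin.succAbove (0 : Fin (n+1))) (g ∘ Fin.succAbove j)
        (hf.comp Fin.succAbove_right_injective)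
        (hg.comp Fin.succAbove_right_injective)
      rw [← Matrix.submatrix_submatrix] at hmem
      have hsgn : ((-1 : ℤ)) ^ (((0 : Fin (n+1)) : ℕ) + (j : ℕ)) = 1 ∨
          ((-1 : ℤ)) ^ (((0 : Fin (n+1)) : ℕ) + (j : ℕ)) = -1 := neg_one_pow_eq_or ℤ _
      rcases intOfSignTypeRange hmem with h | h | h <;> rcases hsgn with hs | hs <;>
        rw [h, hs] <;> simp
    -- B * (adjugate column 0) = det * e₀
    have hBb' : ∀ i, (∑ j, B i j * B.adjugate j 0) = if i = 0 then B.det else 0 := by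
      intro i
      have h := congrFun (congrFun (Matrix.mul_adjugate B) i) 0
      rw [Matrix.mul_apply] at h
      rw [h]
      by_cases hi : i = 0 <;> simp [Matrix.one_apply, hi]
    -- support of the adjugate column
    set J' : Finset (Fin (n+1)) := Finset.univ.filter (fun j => B.adjugate j 0 ≠ 0) with hJ'def
    obtain ⟨J₁, J₂, hun, hdis, hbd⟩ := hpart (J'.image g)
    set J'₁ : Finset (Fin (n+1)) := J'.filter (fun j => g j ∈ J₁) with hJ1def
    set J'₂ : Finset (Fin (n+1)) := J'.filter (fun j => g j ∈ J₂) with hJ2def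
    have himg1 : J'₁.image g = J₁ := by
      ext x
      simp only [hJ1def, Finset.mem_image, Finset.mem_filter]
      constructor
      · rintro ⟨j, ⟨hj, hx⟩, rfl⟩; exact hx
      · intro hx
        have hx' : x ∈ J'.image g := hun ▸ Finset.mem_union_left _ hx
        obtain ⟨j, hj, rfl⟩ := Finset.mem_image.mp hx'
        exact ⟨j, ⟨hj, hx⟩, rfl⟩
    have himg2 : J'₂.image g = J₂ := by
      ext x
      simp only [hJ2def, Finset.mem_image, Finset.mem_filter]
      constructor
      · rintro ⟨j, ⟨hj, hx⟩, rfl⟩; exact hx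
      · intro hx
        have hx' : x ∈ J'.image g := hun ▸ Finset.mem_union_right _ hx
        obtain ⟨j, hj, rfl⟩ := Finset.mem_image.mp hx'
        exact ⟨j, ⟨hj, hx⟩, rfl⟩
    have hsum1 : ∀ i, (∑ x ∈ J₁, A (f i) x) = ∑ j ∈ J'₁, B i j := by
      intro i
      rw [← himg1, Finset.sum_image (fun a _ b _ h => hg h)]
      rfl
    have hsum2 : ∀ i, (∑ x ∈ J₂, A (f i) x) = ∑ j ∈ J'₂, B i j := by
      intro i
      rw [← himg2, Finset.sum_image (fun a _ b _ h => hg h)]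
      rfl
    -- the signed indicator vector
    set z : Fin (n+1) → ℤ :=
      fun j => (if j ∈ J'₁ then 1 else 0) - (if j ∈ J'₂ then 1 else 0) with hzdef
    have hBz : ∀ i, (∑ j, B i j * z j) = (∑ j ∈ J'₁, B i j) - (∑ j ∈ J'₂, B i j) := by
      intro i
      simp only [hzdef, mul_sub, mul_ite, mul_one, mul_zero]
      rw [Finset.sum_sub_distrib]
      congr 1 <;> rw [Finset.sum_ite_mem, Finset.univ_inter]
    have hBzbd : ∀ i, |∑ j, B i j * z j| ≤ 1 := by
      intro i
      rw [hBz, ← hsum1 i, ← hsum2 i]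
      exact hbd (f i)
    have hz0' : ∀ j, B.adjugate j 0 = 0 → z j = 0 := by
      intro j hj
      have hj' : j ∉ J' := by simp [hJ'def, hj]
      have h1 : j ∉ J'₁ := fun h => hj' (Finset.filter_subset _ _ h)
      have h2 : j ∉ J'₂ := fun h => hj' (Finset.filter_subset _ _ h)
      simp [hzdef, h1, h2]
    have hzne : ∀ j, B.adjugate j 0 ≠ 0 → z j = 1 ∨ z j = -1 := by
      intro j hj
      have hj' : j ∈ J' := by simp [hJ'def, hj]
      have hgj : g j ∈ J₁ ∪ J₂ := by
        rw [hun]; exact Finset.mem_image_of_mem g hj'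
      rcases Finset.mem_union.mp hgj with h | h
      · left
        have h1 : j ∈ J'₁ := Finset.mem_filter.mpr ⟨hj', h⟩
        have h2 : j ∉ J'₂ := by
          intro hc
          exact (Finset.disjoint_left.mp hdis h) (Finset.mem_filter.mp hc).2
        simp [hzdef, h1, h2]
      · right
        have h2 : j ∈ J'₂ := Finset.mem_filter.mpr ⟨hj', h⟩
        have h1 : j ∉ J'₁ := by
          intro hc
          exact (Finset.disjoint_left.mp hdis (Finset.mem_filter.mp hc).2) h
        simp [hzdef, h1, h2]
    -- parity
    have hpar : ∀ j, (2 : ℤ) ∣ (z j - B.adjugate j 0) := by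
      intro j
      rcases hadj j with h | h | h
      · rw [h, hz0' j h]; norm_num
      · rcases hzne j (by rw [h]; norm_num) with h' | h' <;> rw [h, h'] <;> norm_num
      · rcases hzne j (by rw [h]; norm_num) with h' | h' <;> rw [h, h'] <;> norm_num
    have hzero : ∀ i : Fin (n+1), i ≠ 0 → (∑ j, B i j * z j) = 0 := by
      intro i hi
      have hsplit : (∑ j, B i j * z j)
          = (∑ j, B i j * (z j - B.adjugate j 0)) + ∑ j, B i j * B.adjugate j 0 := by
        rw [← Finset.sum_add_distrib]
        exact Finset.sum_congr rfl fun j _ => by ring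
      have h2 : (2 : ℤ) ∣ ∑ j, B i j * z j := by
        rw [hsplit, hBb' i, if_neg hi, add_zero]
        exact Finset.dvd_sum fun j _ => Dvd.dvd.mul_left (hpar j) _
      have hb := hBzbd i
      rw [abs_le] at hb
      omega
    -- nonemptiness of support
    have hex : ∃ j, B.adjugate j 0 ≠ 0 := by
      by_contra hc
      push_neg at hc
      have h0 := hBb' 0
      rw [if_pos rfl] at h0
      apply hd
      rw [← h0]
      exact Finset.sum_eq_zero fun j _ => by rw [hc j, mul_zero]
    obtain ⟨j₀, hj₀⟩ := hex
    by_cases hz0 : (∑ j, B 0 j * z j) = 0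
    · exfalso
      have hmv : B.mulVec z = 0 := by
        funext i
        show (∑ j, B i j * z j) = 0
        by_cases hi : i = 0
        · rw [hi]; exact hz0
        · exact hzero i hi
      have hzeq := Matrix.eq_zero_of_mulVec_eq_zero hd hmv
      rcases hzne j₀ hj₀ with h | h <;> rw [congrFun hzeq j₀] at h <;> simp at h
    · set c : ℤ := ∑ j, B 0 j * z j with hcdef
      have hc : c = 1 ∨ c = -1 := by
        have hb := hBzbd 0
        rw [abs_le] at hb
        rw [← hcdef] at hb
        omega
      have hmv2 : B.mulVec (fun j => c * B.adjugate j 0 - B.det * z j) = 0 := by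
        funext i
        show (∑ j, B i j * (c * B.adjugate j 0 - B.det * z j)) = 0
        have hsplit : (∑ j, B i j * (c * B.adjugate j 0 - B.det * z j))
            = c * (∑ j, B i j * B.adjugate j 0) - B.det * (∑ j, B i j * z j) := by
          rw [Finset.mul_sum, Finset.mul_sum, ← Finset.sum_sub_distrib]
          exact Finset.sum_congr rfl fun j _ => by ring
        rw [hsplit, hBb' i]
        by_cases hi : i = 0
        · rw [if_pos hi, hi, ← hcdef]; ring
        · rw [if_neg hi, hzero i hi]; ring
      have heq := Matrix.eq_zero_of_mulVec_eq_zero hd hmv2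
      have h1 := congrFun heq j₀
      simp only [Pi.zero_apply, sub_eq_zero] at h1
      apply intMemSignTypeRange
      rcases hadj j₀ with h | h | h
      · exact absurd h hj₀
      all_goals rcases hzne j₀ hj₀ with h' | h' <;> rcases hc with hc | hc <;>
        rw [h, h', hc] at h1 <;> omega
end

section
/- Let A be a totally unimodular integer matrix with rows indexed by Fin (p+1) and columns indexed by Fin (K+1), written in block form with ε = A 0 0 the pivot entry, and suppose ε = 1 or ε = −1. Define the pivoted matrix Ã by: Ã 0 0 = −ε; Ã 0 j = ε · A 0 j for column indices j ≠ 0; Ã i 0 = ε · A i 0 for row indices i ≠ 0; and Ã i j = A i j − ε · (A i 0) · (A 0 j) for i ≠ 0 and j ≠ 0. Then Ã is totally unimodular. -/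
private lemma neg_mem_signRange {x : ℤ} (hx : x ∈ Set.range (SignType.cast : SignType → ℤ)) :
    -x ∈ Set.range (SignType.cast : SignType → ℤ) := by
  obtain ⟨s, rfl⟩ := hx
  exact ⟨-s, by simp [SignType.coe_neg]⟩

private lemma pm_mul_mem {ε x : ℤ} (hε : ε = 1 ∨ ε = -1)
    (hx : x ∈ Set.range (SignType.cast : SignType → ℤ)) :
    ε * x ∈ Set.range (SignType.cast : SignType → ℤ) := by
  rcases hε with rfl | rfl
  · simpa using hx
  · simpa using neg_mem_signRange hx

private lemma det_eq_of_forall_col_eq_smul_add_const' {n : Type*} [DecidableEq n] [Fintype n]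
    {A B : Matrix n n ℤ} (c : n → ℤ) (k : n) (hk : c k = 0)
    (h : ∀ i j, A i j = B i j + c j * B i k) : A.det = B.det := by
  rw [← Matrix.det_transpose A, ← Matrix.det_transpose B]
  exact Matrix.det_eq_of_forall_row_eq_smul_add_const c k hk (fun i j => h j i)

private lemma cons_inj' {n m : ℕ} {f : Fin n → Fin (m + 1)} (hf : Function.Injective f)
    (h0 : ∀ i, f i ≠ 0) : Function.Injective (Fin.cons 0 f : Fin (n + 1) → Fin (m + 1)) := by
  intro a b hab
  induction a using Fin.cases with
  | zero =>
    induction b using Fin.cases with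
    | zero => rfl
    | succ b => simp only [Fin.cons_zero, Fin.cons_succ] at hab; exact absurd hab.symm (h0 b)
  | succ a =>
    induction b using Fin.cases with
    | zero => simp only [Fin.cons_zero, Fin.cons_succ] at hab; exact absurd hab (h0 a)
    | succ b => simp only [Fin.cons_succ] at hab; rw [hf hab]

/-- item 2 of Proposition 1 of the paper: pivoting a totally unimodular
integer matrix on an entry `ε = A 0 0` with `ε = ±1` yields a totally unimodular matrix. -/
theorem pivot_totallyUnimodular (p K : ℕ) (A : Matrix (Fin (p + 1)) (Fin (K + 1)) ℤ)
    (hA : A.IsTotallyUnimodular) (ε : ℤ) (hε : ε = A 0 0) (hε1 : ε = 1 ∨ ε = -1) :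
    (Matrix.of fun (i : Fin (p + 1)) (j : Fin (K + 1)) =>
      if i = 0 then
        (if j = 0 then -ε else ε * A 0 j)
      else
        (if j = 0 then ε * A i 0 else A i j - ε * A i 0 * A 0 j)).IsTotallyUnimodular := by
  have hε2 : ε * ε = 1 := by rcases hε1 with rfl | rfl <;> norm_num
  intro k f g hf hg
  set B : Matrix (Fin (p + 1)) (Fin (K + 1)) ℤ := Matrix.of fun i j =>
      if i = 0 then
        (if j = 0 then -ε else ε * A 0 j)
      else
        (if j = 0 then ε * A i 0 else A i j - ε * A i 0 * A 0 j) with hB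
  have hBe : ∀ i j, B i j =
      if i = 0 then
        (if j = 0 then -ε else ε * A 0 j)
      else
        (if j = 0 then ε * A i 0 else A i j - ε * A i 0 * A 0 j) := fun i j => rfl
  by_cases hg0 : ∃ x, g x = 0
  · -- column 0 is used
    obtain ⟨x, hx⟩ := hg0
    rcases k with - | k
    · exact x.elim0
    have hgj : ∀ j, j ≠ x → g j ≠ 0 := fun j hj h => hj (hg (h.trans hx.symm))
    -- column operations: add A 0 (g j) times column x to column j
    set S' : Matrix (Fin (k + 1)) (Fin (k + 1)) ℤ := Matrix.of fun i j =>
        if j = x then (if f i = 0 then -ε else ε * A (f i) 0)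
        else (if f i = 0 then 0 else A (f i) (g j)) with hS'
    have hdet : S'.det = (B.submatrix f g).det := by
      apply det_eq_of_forall_col_eq_smul_add_const'
        (fun j => if j = x then 0 else A 0 (g j)) x (by simp)
      intro i j
      simp only [hS', Matrix.of_apply, Matrix.submatrix_apply, hBe]
      by_cases hjx : j = x
      · subst hjx
        by_cases hfi : f i = 0 <;> simp [hfi, hx]
      · have hgj' := hgj j hjx
        by_cases hfi : f i = 0 <;> simp [hfi, hjx, hgj', hx] <;> ring
    rw [← hdet]
    by_cases hf0 : ∃ y, f y = 0
    · -- row 0 also used; expand along that row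
      obtain ⟨y, hy⟩ := hf0
      rw [Matrix.det_succ_row S' y,
        Finset.sum_eq_single x (fun b _ hb => by simp [hS', hb, hy]) (by simp)]
      have hminor : S'.submatrix y.succAbove x.succAbove =
          A.submatrix (f ∘ y.succAbove) (g ∘ x.succAbove) := by
        ext i j
        have h1 : f (y.succAbove i) ≠ 0 := fun h =>
          Fin.succAbove_ne y i (hf (h.trans hy.symm))
        simp [hS', Fin.succAbove_ne x j, h1]
      rw [hminor]
      have hterm : S' y x = -ε := by simp [hS', hy]
      rw [hterm, mul_assoc]
      refine pm_mul_mem (neg_one_pow_eq_or ℤ _) (pm_mul_mem ?_ ?_)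
      · rcases hε1 with rfl | rfl <;> norm_num
      · exact hA _ _ _ (hf.comp (Fin.succAbove_right_injective))
          (hg.comp (Fin.succAbove_right_injective))
    · -- row 0 not used: S' is A.submatrix with column x scaled by ε
      push_neg at hf0
      have hSe : S' = (A.submatrix f g).updateCol x (ε • fun i => A (f i) 0) := by
        ext i j
        by_cases hjx : j = x <;>
          simp [hS', hjx, hf0 i, Matrix.updateCol_apply]
      have hcol : (fun i => A (f i) 0) = fun i => (A.submatrix f g) i x := by
        ext i; simp [hx]
      rw [hSe, Matrix.det_updateCol_smul, hcol, Matrix.updateCol_eq_self]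
      exact pm_mul_mem hε1 (hA _ _ _ hf hg)
  · -- column 0 not used
    push_neg at hg0
    by_cases hf0 : ∃ y, f y = 0
    · -- row 0 used: row operations clear the pivot-column contributions
      obtain ⟨y, hy⟩ := hf0
      set S' : Matrix (Fin k) (Fin k) ℤ := Matrix.of fun i j =>
          if i = y then ε * A 0 (g j) else A (f i) (g j) with hS'
      have hdet : S'.det = (B.submatrix f g).det := by
        apply Matrix.det_eq_of_forall_row_eq_smul_add_const
          (fun i => if i = y then 0 else A (f i) 0) y (by simp)
        intro i j
        simp only [hS', Matrix.of_apply, Matrix.submatrix_apply, hBe]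
        by_cases hiy : i = y
        · subst hiy; simp [hy, hg0 j]
        · have hfi : f i ≠ 0 := fun h => hiy (hf (h.trans hy.symm))
          simp only [hiy, hy, if_neg hfi, if_neg (hg0 j), ite_false, ite_true]
          ring
      have hSe : S' = (A.submatrix f g).updateRow y (ε • fun j => A 0 (g j)) := by
        ext i j
        by_cases hiy : i = y <;> simp [hS', hiy, Matrix.updateRow_apply]
      have hrow : (fun j => A 0 (g j)) = (A.submatrix f g) y := by
        ext j; simp [hy]
      rw [← hdet, hSe, Matrix.det_updateRow_smul, hrow, Matrix.updateRow_eq_self]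
      exact pm_mul_mem hε1 (hA _ _ _ hf hg)
    · -- neither row 0 nor column 0 used: border the submatrix
      push_neg at hf0
      set M : Matrix (Fin (k + 1)) (Fin (k + 1)) ℤ :=
        A.submatrix (Fin.cons 0 f) (Fin.cons 0 g) with hM
      set c : Fin (k + 1) → ℤ := fun i => Fin.cases 0 (fun i' => -(ε * A (f i') 0)) i with hc
      set M' : Matrix (Fin (k + 1)) (Fin (k + 1)) ℤ :=
        Matrix.of fun i j => M i j + c i * M 0 j with hM'
      have hdet : M'.det = M.det :=
        Matrix.det_eq_of_forall_row_eq_smul_add_const c 0 (by simp [hc]) (fun i j => rfl)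
      have hcol0 : ∀ i : Fin k, M' i.succ 0 = 0 := by
        intro i
        have : M i.succ 0 = A (f i) 0 := by simp [hM]
        have h00 : M 0 0 = ε := by simp [hM, ← hε]
        simp only [hM', Matrix.of_apply, this, h00, hc, Fin.cases_succ]
        linear_combination -A (f i) 0 * hε2
      have h00' : M' 0 0 = ε := by simp [hM', hM, hc, ← hε]
      have hminor : M'.submatrix Fin.succ Fin.succ = B.submatrix f g := by
        ext i j
        simp only [hM', Matrix.submatrix_apply, Matrix.of_apply, hM, hc, Fin.cases_succ,
          Fin.cons_succ, Fin.cons_zero, hBe, if_neg (hf0 i), if_neg (hg0 j)]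
        ring
      have key : M.det = ε * (B.submatrix f g).det := by
        rw [← hdet, Matrix.det_succ_column_zero M',
          Finset.sum_eq_single 0 (fun b _ hb => by
            obtain ⟨i, rfl⟩ := Fin.exists_succ_eq_of_ne_zero hb
            rw [hcol0 i, mul_zero, zero_mul]) (by simp)]
        rw [h00', Fin.succAbove_zero, hminor]
        simp
      have hBdet : (B.submatrix f g).det = ε * M.det := by
        rw [key, ← mul_assoc, hε2, one_mul]
      rw [hBdet]
      exact pm_mul_mem hε1 (hA _ _ _ (cons_inj' hf hf0) (cons_inj' hg hg0))
end
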